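/- arXiv:2410.05030 — 6 statements merged into one kernel-verified Lean document; each statement's English description precedes it below -/
import Mathlib

section
/- Let x, y, r, r', S, N be nonzero Gaussian integers with (Sx + r)(Sy + r') = N, |r| < |S|/√2, |r'| < |S|/√2, and |S|³ > |N|. Then |x| ≤ 5|S|, |y| ≤ 5|S|, and |xy| < 9|S|. -/
/-!
Write `s = |S|`, `a = |x|`, `b = |y|` and `w = 1/√2`. By the triangle inequality
`|Sx + r| > s (a - w)` and `|Sy + r'| > s (b - w)`, so `s² (a - w)(b - w) < |N| < s³`, i.e.
`(a - w)(b - w) < s`. Since nonzero Gaussian integers have absolute value at least `1`, the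
factor `b - w ≥ 1 - w` is bounded below, which bounds `a` (and symmetrically `b`) linearly in `s`;
then `ab = (a - w)(b - w) + w (a + b) - w² < s + 10 w s < 9 s`.
-/

lemma GaussianInt.one_le_norm_toComplex {z : GaussianInt} (hz : z ≠ 0) : 1 ≤ ‖(z : ℂ)‖ := by
  have h : (1 : ℝ) ≤ ‖(z : ℂ)‖ ^ 2 := by
    rw [Complex.sq_norm, ← GaussianInt.intCast_real_norm]
    exact_mod_cast GaussianInt.norm_pos.2 hz
  exact (one_le_pow_iff_of_nonneg (_root_.norm_nonneg _) two_ne_zero).1 h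

section NormedDivisionRing

variable {𝕜 : Type*} [NormedDivisionRing 𝕜]

lemma mul_norm_sub_lt_norm_mul_add {S x r : 𝕜} {w : ℝ} (hr : ‖r‖ < ‖S‖ * w) :
    ‖S‖ * (‖x‖ - w) < ‖S * x + r‖ := by
  have h : ‖S * x‖ ≤ ‖S * x + r‖ + ‖r‖ := norm_le_add_norm_add (S * x) r
  rw [norm_mul] at h
  linarith

lemma sq_norm_mul_mul_sub_lt_norm_mul {S x y r r' : 𝕜} {w : ℝ}
    (hx : w ≤ ‖x‖) (hy : w ≤ ‖y‖) (hr : ‖r‖ < ‖S‖ * w) (hr' : ‖r'‖ < ‖S‖ * w) :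
    ‖S‖ ^ 2 * ((‖x‖ - w) * (‖y‖ - w)) < ‖(S * x + r) * (S * y + r')‖ := by
  have hx' := mul_norm_sub_lt_norm_mul_add (x := x) hr
  have hy' := mul_norm_sub_lt_norm_mul_add (x := y) hr'
  calc ‖S‖ ^ 2 * ((‖x‖ - w) * (‖y‖ - w)) = (‖S‖ * (‖x‖ - w)) * (‖S‖ * (‖y‖ - w)) := by ring
    _ < ‖S * x + r‖ * ‖S * y + r'‖ :=
        mul_lt_mul'' hx' hy' (by have := norm_nonneg S; nlinarith)
          (by have := norm_nonneg S; nlinarith)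
    _ = ‖(S * x + r) * (S * y + r')‖ := (norm_mul _ _).symm

end NormedDivisionRing

section Real

variable {a b s w : ℝ}

lemma le_five_mul_of_mul_sub_lt (hb : 1 ≤ b) (hs : 1 ≤ s) (hw : w ≤ 5 / 7) (ha : w ≤ a)
    (h : (a - w) * (b - w) < s) : a ≤ 5 * s := by
  nlinarith [mul_le_mul_of_nonneg_left (by linarith : 1 - w ≤ b - w) (sub_nonneg.2 ha)]

lemma mul_lt_nine_mul_of_mul_sub_lt (hs : 1 ≤ s) (hw₀ : 0 ≤ w) (hw : w ≤ 5 / 7)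
    (ha : a ≤ 5 * s) (hb : b ≤ 5 * s) (h : (a - w) * (b - w) < s) : a * b < 9 * s := by
  nlinarith [mul_le_mul_of_nonneg_left (by linarith : a + b ≤ 10 * s) hw₀,
    mul_le_mul_of_nonneg_left hw (by linarith : (0 : ℝ) ≤ 10 * s)]

end Real

lemma inv_sqrt_two_le : (√2)⁻¹ ≤ 5 / 7 := by
  rw [inv_le_comm₀ (by positivity) (by norm_num), Real.le_sqrt (by norm_num) (by norm_num)]
  norm_num

theorem gaussianInt_xy_lemma_general (x y r r' S N : GaussianInt)
    (hx : x ≠ 0) (hy : y ≠ 0) (hS : S ≠ 0)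
    (heq : (S * x + r) * (S * y + r') = N)
    (hrS : ‖(r : ℂ)‖ < ‖(S : ℂ)‖ / Real.sqrt 2)
    (hr'S : ‖(r' : ℂ)‖ < ‖(S : ℂ)‖ / Real.sqrt 2)
    (hSN : ‖(S : ℂ)‖ ^ 3 > ‖(N : ℂ)‖) :
    ‖(x : ℂ)‖ ≤ 5 * ‖(S : ℂ)‖ ∧
    ‖(y : ℂ)‖ ≤ 5 * ‖(S : ℂ)‖ ∧
    ‖((x * y : GaussianInt) : ℂ)‖ < 9 * ‖(S : ℂ)‖ := by
  have hw := inv_sqrt_two_le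
  have hw₀ : 0 ≤ (√2)⁻¹ := by positivity
  have hw₁ : (√2)⁻¹ ≤ 1 := hw.trans (by norm_num)
  have hs := GaussianInt.one_le_norm_toComplex hS
  have ha := GaussianInt.one_le_norm_toComplex hx
  have hb := GaussianInt.one_le_norm_toComplex hy
  rw [div_eq_mul_inv] at hrS hr'S
  have hN : ((S : ℂ) * x + r) * (S * y + r') = N := by
    rw [← heq]; simp only [GaussianInt.toComplex_mul, GaussianInt.toComplex_add]
  have key : (‖(x : ℂ)‖ - (√2)⁻¹) * (‖(y : ℂ)‖ - (√2)⁻¹) < ‖(S : ℂ)‖ := by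
    have h := sq_norm_mul_mul_sub_lt_norm_mul (x := (x : ℂ)) (y := (y : ℂ))
      (hw₁.trans ha) (hw₁.trans hb) hrS hr'S
    rw [hN] at h
    exact lt_of_mul_lt_mul_left ((h.trans hSN).trans_eq (pow_succ _ 2)) (sq_nonneg _)
  have hxS := le_five_mul_of_mul_sub_lt hb hs hw (hw₁.trans ha) key
  have hyS := le_five_mul_of_mul_sub_lt ha hs hw (hw₁.trans hb) (by rwa [mul_comm] at key)
  refine ⟨hxS, hyS, ?_⟩
  rw [GaussianInt.toComplex_mul, norm_mul]
  exact mul_lt_nine_mul_of_mul_sub_lt hs hw₀ hw hxS hyS key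

/-- If x, y, r, r', S, N are nonzero Gaussian integers with (Sx+r)(Sy+r') = N,
|r|, |r'| < |S|/√2 and |S|³ > |N|, then |x|, |y| ≤ 5|S| and |xy| < 9|S|. -/
theorem gaussianInt_xy_lemma (x y r r' S N : GaussianInt)
    (hx : x ≠ 0) (hy : y ≠ 0) (hr : r ≠ 0) (hr' : r' ≠ 0) (hS : S ≠ 0) (hN : N ≠ 0)
    (heq : (S * x + r) * (S * y + r') = N)
    (hrS : ‖(r : ℂ)‖ < ‖(S : ℂ)‖ / Real.sqrt 2)
    (hr'S : ‖(r' : ℂ)‖ < ‖(S : ℂ)‖ / Real.sqrt 2)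
    (hSN : ‖(S : ℂ)‖ ^ 3 > ‖(N : ℂ)‖) :
    ‖(x : ℂ)‖ ≤ 5 * ‖(S : ℂ)‖ ∧
    ‖(y : ℂ)‖ ≤ 5 * ‖(S : ℂ)‖ ∧
    ‖((x * y : GaussianInt) : ℂ)‖ < 9 * ‖(S : ℂ)‖ :=
  gaussianInt_xy_lemma_general x y r r' S N hx hy hS heq hrS hr'S hSN
end

section
/- Let S be a complex number and let a, b, q : ℕ → ℂ be sequences with a₀ = S, b₀ = 0, b₁ = 1, satisfying the recurrences a_{k+2} = a_k − q_{k+1}·a_{k+1} and b_{k+2} = b_k − q_{k+1}·b_{k+1} for all k ≥ 0, and suppose |a_{k+1}| ≤ (√15/4)·|a_k| for all k ≥ 0. Then for every k ≥ 0: (i) a_k·b_{k+1} − a_{k+1}·b_k = (−1)^k·S, and (ii) |a_k·b_{k+1}| ≤ 16·(1 − (15/16)^{k+1})·|S|; in particular |a_k·b_{k+1}| ≤ 16·|S|. -/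
/-!
The Wronskian `a k * b (k + 1) - a (k + 1) * b k` of two solutions of the same three-term
recurrence only changes sign from one index to the next, so it is `(-1) ^ k * S`. Reading this
identity at index `k + 1` gives `‖a (k+1) b (k+2)‖ ≤ ‖a (k+2)‖ ‖b (k+1)‖ + ‖S‖`, and two steps
of the decay hypothesis give `‖a (k+2)‖ ≤ (15/16) ‖a k‖`. Hence `x k = ‖a k * b (k + 1)‖`
satisfies `x (k+1) ≤ (15/16) x k + ‖S‖` with `x 0 = ‖S‖`; summing the geometric series gives
the bound.
-/

open Finset

theorem le_mul_geom_sum_of_le_mul_add {x : ℕ → ℝ} {r c : ℝ} (hr : 0 ≤ r) (h0 : x 0 ≤ c)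
    (hstep : ∀ k, x (k + 1) ≤ r * x k + c) (k : ℕ) :
    x k ≤ c * ∑ i ∈ range (k + 1), r ^ i := by
  induction k with
  | zero => simpa using h0
  | succ k ih =>
    calc x (k + 1) ≤ r * x k + c := hstep k
      _ ≤ r * (c * ∑ i ∈ range (k + 1), r ^ i) + c := by gcongr
      _ = c * ∑ i ∈ range (k + 1 + 1), r ^ i := by rw [geom_sum_succ (n := k + 1)]; ring

section ThreeTermRecurrence

variable {R : Type*} {a b q : ℕ → R}

theorem wronskian_eq_neg_one_pow_mul [CommRing R]
    (ha : ∀ k, a (k + 2) = a k - q (k + 1) * a (k + 1))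
    (hb : ∀ k, b (k + 2) = b k - q (k + 1) * b (k + 1)) (k : ℕ) :
    a k * b (k + 1) - a (k + 1) * b k = (-1) ^ k * (a 0 * b 1 - a 1 * b 0) := by
  induction k with
  | zero => simp
  | succ k ih =>
    rw [ha k, hb k, pow_succ]
    linear_combination -ih

theorem norm_mul_succ_le_mul_add [NormedField R]
    (ha : ∀ k, a (k + 2) = a k - q (k + 1) * a (k + 1))
    (hb : ∀ k, b (k + 2) = b k - q (k + 1) * b (k + 1)) {r : ℝ}
    (hdec : ∀ k, ‖a (k + 2)‖ ≤ r * ‖a k‖) (k : ℕ) :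
    ‖a (k + 1) * b (k + 2)‖ ≤ r * ‖a k * b (k + 1)‖ + ‖a 0 * b 1 - a 1 * b 0‖ := by
  have hW := wronskian_eq_neg_one_pow_mul ha hb (k + 1)
  calc ‖a (k + 1) * b (k + 2)‖
      = ‖a (k + 2) * b (k + 1) + (-1) ^ (k + 1) * (a 0 * b 1 - a 1 * b 0)‖ := by
        rw [← hW]; ring_nf
    _ ≤ ‖a (k + 2)‖ * ‖b (k + 1)‖ + ‖a 0 * b 1 - a 1 * b 0‖ := by
        grw [norm_add_le]; simp
    _ ≤ r * ‖a k * b (k + 1)‖ + ‖a 0 * b 1 - a 1 * b 0‖ := by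
        grw [hdec k]; rw [norm_mul, mul_assoc]

end ThreeTermRecurrence

/-- For sequences in ℂ built from S with b₀ = 0, b₁ = 1 and the Euclidean
recurrences, with |a_{k+1}| ≤ (√15/4)·|a_k|, one has
a_k·b_{k+1} − a_{k+1}·b_k = (−1)^k·S and
|a_k·b_{k+1}| ≤ 16·(1 − (15/16)^{k+1})·|S| ≤ 16·|S|. -/
theorem complex_ab_lemma (S : ℂ) (a b q : ℕ → ℂ)
    (ha0 : a 0 = S) (hb0 : b 0 = 0) (hb1 : b 1 = 1)
    (ha : ∀ k, a (k + 2) = a k - q (k + 1) * a (k + 1))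
    (hb : ∀ k, b (k + 2) = b k - q (k + 1) * b (k + 1))
    (hdec : ∀ k, ‖a (k + 1)‖ ≤ Real.sqrt 15 / 4 * ‖a k‖) :
    ∀ k, a k * b (k + 1) - a (k + 1) * b k = (-1) ^ k * S ∧
      ‖a k * b (k + 1)‖ ≤
        16 * (1 - (15 / 16 : ℝ) ^ (k + 1)) * ‖S‖ ∧
      ‖a k * b (k + 1)‖ ≤ 16 * ‖S‖ := by
  have hW : a 0 * b 1 - a 1 * b 0 = S := by simp [ha0, hb0, hb1]
  have hdec₂ (k : ℕ) : ‖a (k + 2)‖ ≤ 15 / 16 * ‖a k‖ := by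
    have hsq : (Real.sqrt 15 / 4) ^ 2 = 15 / 16 := by
      rw [div_pow, Real.sq_sqrt (by norm_num)]; norm_num
    calc ‖a (k + 2)‖ ≤ Real.sqrt 15 / 4 * (Real.sqrt 15 / 4 * ‖a k‖) := by
          grw [hdec (k + 1), hdec k]
      _ = 15 / 16 * ‖a k‖ := by rw [← mul_assoc, ← sq, hsq]
  intro k
  have hbound : ‖a k * b (k + 1)‖ ≤ 16 * (1 - (15 / 16 : ℝ) ^ (k + 1)) * ‖S‖ := by
    have := le_mul_geom_sum_of_le_mul_add (x := fun k ↦ ‖a k * b (k + 1)‖) (by norm_num)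
      (by simp [ha0, hb1]) (fun k ↦ hW ▸ norm_mul_succ_le_mul_add ha hb hdec₂ k) k
    rw [geom_sum_eq (by norm_num)] at this
    convert this using 1
    ring
  refine ⟨hW ▸ wronskian_eq_neg_one_pow_mul ha hb k, hbound, hbound.trans ?_⟩
  have : (0 : ℝ) ≤ (15 / 16) ^ (k + 1) := by positivity
  nlinarith [norm_nonneg S]
end

section
/- Let f, g, r, r', S, N be nonzero polynomials in ℤ[x] with (Sf + r)(Sg + r') = N, deg(r) < deg(S), deg(r') < deg(S), and 3·deg(S) ≥ deg(N). Let a, b, q : ℕ → ℚ[x] be sequences with a₀ = S, b₀ = 0, b₁ = 1, satisfying a_{k+2} = a_k − q_{k+1}·a_{k+1} and b_{k+2} = b_k − q_{k+1}·b_{k+1} for all k ≥ 0, with deg(a_{k+1}) < deg(a_k) whenever a_k ≠ 0, and suppose there exists t with a_t = 0. Then there exists an index k such that deg(a_k·f + b_k·g) ≤ deg(S). -/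
/-!
Since `deg r, deg r' < deg S`, the factors `S f + r` and `S g + r'` have degrees `deg S + deg f`
and `deg S + deg g`, so `deg N ≤ 3 deg S` forces `deg f + deg g ≤ deg S`. Along the remainder
sequence the cofactors satisfy `deg b (k + 1) + deg a k ≤ deg a 0`. Take `k` minimal with
`deg a k + deg f ≤ deg S` (it exists since the sequence terminates). Then `a k * f` is small,
and for `k = j + 1` minimality gives `deg b k + deg a j ≤ deg S < deg a j + deg f`, so
`deg b k < deg f` and `deg (b k * g) < deg f + deg g ≤ deg S`.
-/

open Polynomial

section DegreeBound

variable {R : Type*} [Semiring R] [NoZeroDivisors R]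

theorem natDegree_mul_add_of_natDegree_lt {S f r : R[X]} (hf : f ≠ 0)
    (hr : r.natDegree < S.natDegree) : (S * f + r).natDegree = S.natDegree + f.natDegree := by
  have hS : S ≠ 0 := ne_zero_of_natDegree_gt hr
  rw [natDegree_add_eq_left_of_natDegree_lt, natDegree_mul hS hf]
  rw [natDegree_mul hS hf]
  exact Nat.lt_add_right _ hr

theorem degree_add_degree_le_of_mul_add_mul_add_eq {f g r r' S N : R[X]}
    (heq : (S * f + r) * (S * g + r') = N)
    (hrS : r.natDegree < S.natDegree) (hr'S : r'.natDegree < S.natDegree)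
    (hSN : 3 * S.natDegree ≥ N.natDegree) :
    f.degree + g.degree ≤ S.degree := by
  rcases eq_or_ne f 0 with rfl | hf
  · simp
  rcases eq_or_ne g 0 with rfl | hg
  · simp
  have hSf := natDegree_mul_add_of_natDegree_lt hf hrS
  have hSg := natDegree_mul_add_of_natDegree_lt hg hr'S
  have hA : S * f + r ≠ 0 := ne_zero_of_natDegree_gt (hSf ▸ Nat.lt_add_right _ hrS)
  have hB : S * g + r' ≠ 0 := ne_zero_of_natDegree_gt (hSg ▸ Nat.lt_add_right _ hr'S)
  have hN : N.natDegree = S.natDegree + f.natDegree + (S.natDegree + g.natDegree) := by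
    rw [← heq, natDegree_mul hA hB, hSf, hSg]
  rw [degree_eq_natDegree hf, degree_eq_natDegree hg,
    degree_eq_natDegree (ne_zero_of_natDegree_gt hrS)]
  exact_mod_cast (by omega : f.natDegree + g.natDegree ≤ S.natDegree)

end DegreeBound

theorem WithBot.add_le_of_add_le_of_lt_add {x y z u s : WithBot ℕ} (hy : y ≠ ⊥)
    (hxy : x + y ≤ s) (hyz : s < y + z) (hzu : z + u ≤ s) : x + u ≤ s := by
  have hxz : x < z :=
    (WithBot.add_lt_add_iff_right hy).1 (by rw [add_comm z]; exact hxy.trans_lt hyz)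
  calc x + u ≤ z + u := by gcongr
    _ ≤ s := hzu

structure IsRemainderSeq {R : Type*} [Ring R] (a b q : ℕ → R[X]) : Prop where
  b_zero : b 0 = 0
  b_one : b 1 = 1
  a_add_two : ∀ k, a (k + 2) = a k - q (k + 1) * a (k + 1)
  b_add_two : ∀ k, b (k + 2) = b k - q (k + 1) * b (k + 1)
  degree_succ_lt : ∀ k, a k ≠ 0 → (a (k + 1)).degree < (a k).degree

namespace IsRemainderSeq

variable {R : Type*} [Ring R] {a b q : ℕ → R[X]}

theorem degree_q_mul_le (h : IsRemainderSeq a b q) {k : ℕ} (hk : a k ≠ 0) :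
    (q (k + 1) * a (k + 1)).degree ≤ (a k).degree := by
  rcases eq_or_ne (a (k + 1)) 0 with hk1 | hk1
  · simp [hk1]
  have hqa : q (k + 1) * a (k + 1) = a k - a (k + 2) := by rw [h.a_add_two, sub_sub_cancel]
  rw [hqa]
  exact (degree_sub_le _ _).trans
    (max_le le_rfl ((h.degree_succ_lt _ hk1).trans (h.degree_succ_lt _ hk)).le)

theorem degree_b_add_degree_a_le [NoZeroDivisors R] (h : IsRemainderSeq a b q) {m : ℕ}
    (hm : ∀ i < m, a i ≠ 0) :
    (b m).degree + (a m).degree ≤ (a 0).degree ∧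
      (b (m + 1)).degree + (a m).degree ≤ (a 0).degree := by
  induction m with
  | zero =>
    refine ⟨by simp [h.b_zero], ?_⟩
    calc (b 1).degree + (a 0).degree ≤ 0 + (a 0).degree := by
          rw [h.b_one]; gcongr; exact degree_one_le
      _ = (a 0).degree := zero_add _
  | succ m ih =>
    obtain ⟨hbm, hbm1⟩ := ih fun i hi => hm i (hi.trans m.lt_succ_self)
    have ham : a m ≠ 0 := hm m m.lt_succ_self
    have hlt := h.degree_succ_lt m ham
    refine ⟨le_trans (by gcongr) hbm1, ?_⟩
    rw [h.b_add_two]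
    calc (b m - q (m + 1) * b (m + 1)).degree + (a (m + 1)).degree
        ≤ max (b m).degree ((q (m + 1)).degree + (b (m + 1)).degree) + (a (m + 1)).degree := by
          gcongr
          exact (degree_sub_le _ _).trans_eq (by rw [degree_mul])
      _ = max ((b m).degree + (a (m + 1)).degree)
            ((b (m + 1)).degree + (q (m + 1) * a (m + 1)).degree) := by
          rw [← max_add_add_right, degree_mul, add_comm (q _).degree, add_assoc]
      _ ≤ (a 0).degree :=
          max_le (le_trans (by gcongr) hbm) (le_trans (by gcongr; exact h.degree_q_mul_le ham) hbm1)

theorem exists_degree_mul_add_mul_le [NoZeroDivisors R] (h : IsRemainderSeq a b q)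
    {F G : R[X]} (hFG : F.degree + G.degree ≤ (a 0).degree) (hterm : ∃ t, a t = 0) :
    ∃ k, (a k * F + b k * G).degree ≤ (a 0).degree := by
  classical
  have hex : ∃ k, (a k).degree + F.degree ≤ (a 0).degree := hterm.imp fun t ht => by simp [ht]
  have hne : ∀ i < Nat.find hex, a i ≠ 0 := fun i hi hai => Nat.find_min hex hi (by simp [hai])
  refine ⟨Nat.find hex, (degree_add_le _ _).trans (max_le ?_ ?_)⟩
  · rw [degree_mul]
    exact Nat.find_spec hex
  rw [degree_mul]
  cases hk : Nat.find hex with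
  | zero => simp [h.b_zero]
  | succ j =>
    rw [hk] at hne
    exact WithBot.add_le_of_add_le_of_lt_add (degree_ne_bot.2 (hne j j.lt_succ_self))
      (h.degree_b_add_degree_a_le fun i hi => hne i (hi.trans j.lt_succ_self)).2
      (not_le.1 (Nat.find_min hex (hk ▸ j.lt_succ_self))) hFG

end IsRemainderSeq

theorem poly_small_term_general (f g r r' S N : ℤ[X])
    (heq : (S * f + r) * (S * g + r') = N)
    (hrS : r.natDegree < S.natDegree) (hr'S : r'.natDegree < S.natDegree)
    (hSN : 3 * S.natDegree ≥ N.natDegree)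
    (a b q : ℕ → ℚ[X])
    (ha0 : a 0 = S.map (Int.castRingHom ℚ)) (hb0 : b 0 = 0) (hb1 : b 1 = 1)
    (ha : ∀ k, a (k + 2) = a k - q (k + 1) * a (k + 1))
    (hb : ∀ k, b (k + 2) = b k - q (k + 1) * b (k + 1))
    (hdec : ∀ k, a k ≠ 0 → (a (k + 1)).degree < (a k).degree)
    (hterm : ∃ t, a t = 0) :
    ∃ k, (a k * f.map (Int.castRingHom ℚ) + b k * g.map (Int.castRingHom ℚ)).degree ≤
      S.degree := by
  have hinj : Function.Injective (Int.castRingHom ℚ) := Int.cast_injective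
  have hdeg : (a 0).degree = S.degree := by rw [ha0, degree_map_eq_of_injective hinj]
  have hfg : (f.map (Int.castRingHom ℚ)).degree + (g.map (Int.castRingHom ℚ)).degree ≤
      (a 0).degree := by
    simpa only [hdeg, degree_map_eq_of_injective hinj] using
      degree_add_degree_le_of_mul_add_mul_add_eq heq hrS hr'S hSN
  simpa only [hdeg] using
    IsRemainderSeq.exists_degree_mul_add_mul_le ⟨hb0, hb1, ha, hb, hdec⟩ hfg hterm

/-- Under the hypotheses of the polynomial fg-lemma, given Euclidean remainder
sequences a, b over ℚ[x] starting from a₀ = S (viewed in ℚ[x]) that terminate,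
there is an index k with deg(a_k·f + b_k·g) ≤ deg S. -/
theorem poly_small_term (f g r r' S N : ℤ[X])
    (hf : f ≠ 0) (hg : g ≠ 0) (hr : r ≠ 0) (hr' : r' ≠ 0) (hS : S ≠ 0) (hN : N ≠ 0)
    (heq : (S * f + r) * (S * g + r') = N)
    (hrS : r.natDegree < S.natDegree) (hr'S : r'.natDegree < S.natDegree)
    (hSN : 3 * S.natDegree ≥ N.natDegree)
    (a b q : ℕ → ℚ[X])
    (ha0 : a 0 = S.map (Int.castRingHom ℚ)) (hb0 : b 0 = 0) (hb1 : b 1 = 1)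
    (ha : ∀ k, a (k + 2) = a k - q (k + 1) * a (k + 1))
    (hb : ∀ k, b (k + 2) = b k - q (k + 1) * b (k + 1))
    (hdec : ∀ k, a k ≠ 0 → (a (k + 1)).degree < (a k).degree)
    (hterm : ∃ t, a t = 0) :
    ∃ k, (a k * f.map (Int.castRingHom ℚ) + b k * g.map (Int.castRingHom ℚ)).degree ≤
      S.degree :=
  poly_small_term_general f g r r' S N heq hrS hr'S hSN a b q ha0 hb0 hb1 ha hb hdec hterm
end

section
/- For every integer ℓ ≥ 3, setting N(ℓ) = (2ℓ+1)(ℓ²+1)(ℓ²+ℓ+1)(2ℓ²−ℓ+1)(2ℓ²+ℓ+1) and S(ℓ) = 2ℓ³+ℓ²+2ℓ, one has S(ℓ)³ > N(ℓ), and N(ℓ) has exactly 6 positive divisors congruent to 1 modulo S(ℓ). -/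
set_option maxHeartbeats 4000000 in
/-- Cohen's family: for ℓ ≥ 3, with
N(ℓ) = (2ℓ+1)(ℓ²+1)(ℓ²+ℓ+1)(2ℓ²−ℓ+1)(2ℓ²+ℓ+1) and S(ℓ) = 2ℓ³+ℓ²+2ℓ,
one has S(ℓ)³ > N(ℓ) and N(ℓ) has exactly 6 positive divisors ≡ 1 (mod S(ℓ)). -/
theorem cohen_six_divisors (ℓ : ℤ) (hℓ : 3 ≤ ℓ) :
    (2 * ℓ ^ 3 + ℓ ^ 2 + 2 * ℓ) ^ 3 >
      (2 * ℓ + 1) * (ℓ ^ 2 + 1) * (ℓ ^ 2 + ℓ + 1) *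
        (2 * ℓ ^ 2 - ℓ + 1) * (2 * ℓ ^ 2 + ℓ + 1) ∧
    {d : ℤ | 0 < d ∧
        d ∣ (2 * ℓ + 1) * (ℓ ^ 2 + 1) * (ℓ ^ 2 + ℓ + 1) *
          (2 * ℓ ^ 2 - ℓ + 1) * (2 * ℓ ^ 2 + ℓ + 1) ∧
        (2 * ℓ ^ 3 + ℓ ^ 2 + 2 * ℓ) ∣ d - 1}.ncard = 6 := by
  have hl0 : (0:ℤ) < ℓ := by linarith
  have hp2 : 3*ℓ ≤ ℓ^2 := by nlinarith
  have hp3 : 3*ℓ^2 ≤ ℓ^3 := by nlinarith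
  have hp4 : 3*ℓ^3 ≤ ℓ^4 := by nlinarith
  have hp5 : 3*ℓ^4 ≤ ℓ^5 := by linarith [mul_nonneg (pow_nonneg hl0.le 4) (by linarith : (0:ℤ) ≤ ℓ - 3)]
  have hp6 : 3*ℓ^5 ≤ ℓ^6 := by linarith [mul_nonneg (pow_nonneg hl0.le 5) (by linarith : (0:ℤ) ≤ ℓ - 3)]
  have hp7 : 3*ℓ^6 ≤ ℓ^7 := by linarith [mul_nonneg (pow_nonneg hl0.le 6) (by linarith : (0:ℤ) ≤ ℓ - 3)]
  have hS0 : (0:ℤ) < 2*ℓ^3+ℓ^2+2*ℓ := by linarith [hp2, hp3]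
  have hT0 : (0:ℤ) < 2*ℓ^2+ℓ+1 := by linarith [hp2]
  have hT1 : (0:ℤ) < 2*ℓ^2+ℓ+2 := by linarith [hp2]
  have hN0 : (0:ℤ) < (2 * ℓ + 1) * (ℓ ^ 2 + 1) * (ℓ ^ 2 + ℓ + 1) *
      (2 * ℓ ^ 2 - ℓ + 1) * (2 * ℓ ^ 2 + ℓ + 1) := by
    have h1 : (0:ℤ) < 2*ℓ+1 := by linarith
    have h2 : (0:ℤ) < ℓ^2+1 := by linarith [hp2]
    have h3 : (0:ℤ) < ℓ^2+ℓ+1 := by linarith [hp2]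
    have h4 : (0:ℤ) < 2*ℓ^2-ℓ+1 := by linarith [hp2]
    exact mul_pos (mul_pos (mul_pos (mul_pos h1 h2) h3) h4) hT0
  constructor
  · -- S^3 > N
    have key : (2 * ℓ ^ 3 + ℓ ^ 2 + 2 * ℓ) ^ 3 -
        (2 * ℓ + 1) * (ℓ ^ 2 + 1) * (ℓ ^ 2 + ℓ + 1) *
          (2 * ℓ ^ 2 - ℓ + 1) * (2 * ℓ ^ 2 + ℓ + 1)
        = 4*ℓ^7+ℓ^5-7*ℓ^4-6*ℓ^3-7*ℓ^2-3*ℓ-1 := by ring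
    linarith [key, hp2, hp3, hp4, hp5, hp6, hp7, hl0, hℓ]
  · -- the divisor count
    have hset : {d : ℤ | 0 < d ∧
        d ∣ (2 * ℓ + 1) * (ℓ ^ 2 + 1) * (ℓ ^ 2 + ℓ + 1) *
          (2 * ℓ ^ 2 - ℓ + 1) * (2 * ℓ ^ 2 + ℓ + 1) ∧
        (2 * ℓ ^ 3 + ℓ ^ 2 + 2 * ℓ) ∣ d - 1} =
        ({1, 1+(2*ℓ^3+ℓ^2+2*ℓ), 1+(2*ℓ^3+ℓ^2+2*ℓ)*ℓ,
          1+(2*ℓ^3+ℓ^2+2*ℓ)*(2*ℓ^2+3*ℓ+2),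
          1+(2*ℓ^3+ℓ^2+2*ℓ)*(2*ℓ^3-ℓ^2+2*ℓ),
          1+(2*ℓ^3+ℓ^2+2*ℓ)*(ℓ*(2*ℓ^3+ℓ^2+2*ℓ)+ℓ+1)} : Set ℤ) := by
      ext d
      simp only [Set.mem_setOf_eq, Set.mem_insert_iff, Set.mem_singleton_iff]
      constructor
      · rintro ⟨hd0, ⟨e, he⟩, ⟨a, ha⟩⟩
        have hd1 : 1 ≤ d := hd0
        have ha0 : 0 ≤ a := by
          rcases le_or_gt 0 a with h | h
          · exact h
          · exfalso
            have h1 : a ≤ -1 := by omega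
            have h2 : (2*ℓ^3+ℓ^2+2*ℓ) * a ≤ (2*ℓ^3+ℓ^2+2*ℓ) * (-1) :=
              mul_le_mul_of_nonneg_left h1 hS0.le
            linarith
        have he0 : 0 < e := by
          rcases le_or_gt e 0 with h | h
          · exfalso
            have hz : 0 ≤ d * (-e) := mul_nonneg hd0.le (by linarith)
            linarith [hz, he, hN0]
          · exact h
        obtain ⟨b, hbdef⟩ : ∃ b : ℤ,
            b = (2*ℓ^2+ℓ+1)*(ℓ*(2*ℓ^3+ℓ^2+2*ℓ)+ℓ+1) - a*e := ⟨_, rfl⟩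
        have heb : e = (2*ℓ^2+ℓ+1) + (2*ℓ^3+ℓ^2+2*ℓ)*b := by
          linear_combination (-1)*he + (-e)*ha + (-(2*ℓ^3+ℓ^2+2*ℓ))*hbdef
        clear hbdef
        have hb0 : 0 ≤ b := by
          rcases le_or_gt 0 b with h | h
          · exact h
          · exfalso
            have h1 : b ≤ -1 := by omega
            have h2 : (2*ℓ^3+ℓ^2+2*ℓ) * b ≤ (2*ℓ^3+ℓ^2+2*ℓ) * (-1) :=
              mul_le_mul_of_nonneg_left h1 hS0.le
            have : e ≤ (2*ℓ^2+ℓ+1) - (2*ℓ^3+ℓ^2+2*ℓ) := by linarith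
            linarith [hp3, hp2]
        have h1 : a*(2*ℓ^2+ℓ+1) + b + a*b*(2*ℓ^3+ℓ^2+2*ℓ)
            = ℓ*(2*ℓ^2+ℓ+1)*(2*ℓ^3+ℓ^2+2*ℓ) + (ℓ+1)*(2*ℓ^2+ℓ+1) := by
          have hx : (2*ℓ^3+ℓ^2+2*ℓ) * (a*(2*ℓ^2+ℓ+1) + b + a*b*(2*ℓ^3+ℓ^2+2*ℓ))
              = (2*ℓ^3+ℓ^2+2*ℓ) * (ℓ*(2*ℓ^2+ℓ+1)*(2*ℓ^3+ℓ^2+2*ℓ) + (ℓ+1)*(2*ℓ^2+ℓ+1)) := by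
            linear_combination (-1)*he + (-((2*ℓ^2+ℓ+1)+(2*ℓ^3+ℓ^2+2*ℓ)*b))*ha + (-d)*heb
          exact mul_left_cancel₀ hS0.ne' hx
        have hda : (0:ℤ) < 1 + a*(2*ℓ^3+ℓ^2+2*ℓ) := by
          have := mul_nonneg ha0 hS0.le
          linarith
        rcases (by omega : a = 0 ∨ a = 1 ∨ (2 ≤ a ∧ a + 1 ≤ ℓ) ∨ a = ℓ ∨ ℓ + 1 ≤ a) with
          h | h | ⟨h2a, h2b⟩ | h | h
        · exact Or.inl (by linear_combination ha + (2*ℓ^3+ℓ^2+2*ℓ)*h)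
        · exact Or.inr (Or.inl (by linear_combination ha + (2*ℓ^3+ℓ^2+2*ℓ)*h))
        · -- 2 ≤ a ≤ ℓ-1 : impossible
          exfalso
          have hq : (ℓ*(2*ℓ^2+ℓ+1) - a*b)*(1+a*(2*ℓ^3+ℓ^2+2*ℓ))
              = (2*ℓ^2+ℓ+1)*(a-1)*(a-ℓ) := by linear_combination (-a)*h1
          have hfpos : 0 < (2*ℓ^2+ℓ+1)*(a-1)*(ℓ-a) :=
            mul_pos (mul_pos hT0 (by linarith)) (by linarith)
          have hflip : (2*ℓ^2+ℓ+1)*(a-1)*(a-ℓ) = -((2*ℓ^2+ℓ+1)*(a-1)*(ℓ-a)) := by ring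
          have hqneg : ℓ*(2*ℓ^2+ℓ+1) - a*b < 0 := by
            by_contra hcon
            push_neg at hcon
            have hz : 0 ≤ (ℓ*(2*ℓ^2+ℓ+1) - a*b)*(1+a*(2*ℓ^3+ℓ^2+2*ℓ)) :=
              mul_nonneg hcon hda.le
            linarith
          have hqle : ℓ*(2*ℓ^2+ℓ+1) - a*b ≤ -1 := by
            have := Int.lt_iff_add_one_le.mp hqneg
            linarith
          have hle : (ℓ*(2*ℓ^2+ℓ+1) - a*b) * (1 + a*(2*ℓ^3+ℓ^2+2*ℓ))
              ≤ (-1) * (1 + a*(2*ℓ^3+ℓ^2+2*ℓ)) :=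
            mul_le_mul_of_nonneg_right hqle hda.le
          -- T(a-1)(ℓ-a) < 1 + aS
          have hlt : (2*ℓ^2+ℓ+1)*(a-1)*(ℓ-a) < 1 + a*(2*ℓ^3+ℓ^2+2*ℓ) := by
            have hid : 1 + a*(2*ℓ^3+ℓ^2+2*ℓ) - (2*ℓ^2+ℓ+1)*(a-1)*(ℓ-a)
                = 1 + a*ℓ + (2*ℓ^2+ℓ+1)*(a^2-a+ℓ) := by ring
            have hx1 : 0 < a*ℓ := mul_pos (by linarith) hl0
            have hx2 : 0 < (2*ℓ^2+ℓ+1)*(a^2-a+ℓ) := by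
              have : 0 < a^2-a+ℓ := by nlinarith
              exact mul_pos hT0 this
            linarith
          linarith
        · exact Or.inr (Or.inr (Or.inl (by linear_combination ha + (2*ℓ^3+ℓ^2+2*ℓ)*h)))
        · -- a ≥ ℓ+1
          have hq : (ℓ*(2*ℓ^2+ℓ+1) - a*b)*(1+a*(2*ℓ^3+ℓ^2+2*ℓ))
              = (2*ℓ^2+ℓ+1)*(a-1)*(a-ℓ) := by linear_combination (-a)*h1
          have hq1 : 1 ≤ ℓ*(2*ℓ^2+ℓ+1) - a*b := by
            by_contra hcon
            push_neg at hcon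
            have hq0' : ℓ*(2*ℓ^2+ℓ+1) - a*b ≤ 0 :=
              Int.lt_add_one_iff.mp (by linarith)
            have hfpos : 0 < (2*ℓ^2+ℓ+1)*(a-1)*(a-ℓ) :=
              mul_pos (mul_pos hT0 (by linarith)) (by linarith)
            have hz : 0 ≤ (-(ℓ*(2*ℓ^2+ℓ+1) - a*b))*(1+a*(2*ℓ^3+ℓ^2+2*ℓ)) :=
              mul_nonneg (by linarith) hda.le
            linarith [hz, hq, hfpos]
          have hbT : b ≤ 2*ℓ^2+ℓ := by
            by_contra hcon
            push_neg at hcon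
            have hbig : (ℓ+1)*(2*ℓ^2+ℓ+1) ≤ a*b :=
              mul_le_mul h (by omega) (by positivity) (by linarith)
            linarith [hbig, hq1, hp2, hp3]
          rcases (by omega : b = 0 ∨ 1 ≤ b) with hb | hb
          · -- b = 0 : a = ℓS+ℓ+1
            have hTa : (2*ℓ^2+ℓ+1)*a = (2*ℓ^2+ℓ+1)*(ℓ*(2*ℓ^3+ℓ^2+2*ℓ)+ℓ+1) := by
              linear_combination h1 - (1+a*(2*ℓ^3+ℓ^2+2*ℓ))*hb
            have haval : a = ℓ*(2*ℓ^3+ℓ^2+2*ℓ)+ℓ+1 := mul_left_cancel₀ hT0.ne' hTa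
            exact Or.inr (Or.inr (Or.inr (Or.inr (Or.inr
              (by linear_combination ha + (2*ℓ^3+ℓ^2+2*ℓ)*haval)))))
          · -- 1 ≤ b
            obtain ⟨c, hcdef⟩ : ∃ c : ℤ,
                c = a + a*b*ℓ - ℓ^2*(2*ℓ^2+ℓ+1) - ℓ - 1 := ⟨_, rfl⟩
            have hc : a - b - ℓ - 1 = (2*ℓ^2+ℓ+2)*c := by
              linear_combination (-1)*h1 - (2*ℓ^2+ℓ+2)*hcdef
            clear hcdef
            have hc0 : 0 ≤ c := by
              by_contra hcon
              push_neg at hcon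
              have h1' : c ≤ -1 := by omega
              have h2' : (2*ℓ^2+ℓ+2)*c ≤ (2*ℓ^2+ℓ+2)*(-1) :=
                mul_le_mul_of_nonneg_left h1' hT1.le
              linarith
            have hG : c*((2*ℓ^2+ℓ+1)+b*(2*ℓ^3+ℓ^2+2*ℓ))
                = ℓ^2*(2*ℓ^2+ℓ+1) - ℓ*b^2 - (ℓ^2+ℓ+1)*b := by
              have hx : (2*ℓ^2+ℓ+2) * (c*((2*ℓ^2+ℓ+1)+b*(2*ℓ^3+ℓ^2+2*ℓ)))
                  = (2*ℓ^2+ℓ+2) * (ℓ^2*(2*ℓ^2+ℓ+1) - ℓ*b^2 - (ℓ^2+ℓ+1)*b) := by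
                linear_combination h1 - ((2*ℓ^2+ℓ+1)+b*(2*ℓ^3+ℓ^2+2*ℓ))*hc
              exact mul_left_cancel₀ hT1.ne' hx
            have hTbS : (0:ℤ) < (2*ℓ^2+ℓ+1)+b*(2*ℓ^3+ℓ^2+2*ℓ) := by
              have := mul_nonneg hb0 hS0.le
              linarith
            rcases (by omega : c = 0 ∨ 1 ≤ c) with hcz | hc1
            · -- c = 0 : impossible by descent
              exfalso
              have hR : (0:ℤ) = ℓ^2*(2*ℓ^2+ℓ+1) - ℓ*b^2 - (ℓ^2+ℓ+1)*b := by
                linear_combination hG - ((2*ℓ^2+ℓ+1)+b*(2*ℓ^3+ℓ^2+2*ℓ))*hcz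
              obtain ⟨β, hβdef⟩ : ∃ x : ℤ,
                  x = ℓ*(2*ℓ^2+ℓ+1) - b^2 - (ℓ+1)*b := ⟨_, rfl⟩
              have hb1 : b = ℓ*β := by linear_combination hR - ℓ*hβdef
              clear hβdef
              subst hb1
              have hβpos : 1 ≤ β := by
                rcases le_or_gt 1 β with hx | hx
                · exact hx
                · exfalso
                  have hβ0 : β ≤ 0 := by omega
                  have := mul_nonneg hl0.le (neg_nonneg.mpr hβ0)
                  linarith
              have hBeq : ℓ*(2*ℓ^2+ℓ+1) = ℓ^2*β^2 + (ℓ^2+ℓ+1)*β := by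
                have hx : ℓ*(ℓ*(2*ℓ^2+ℓ+1)) = ℓ*(ℓ^2*β^2 + (ℓ^2+ℓ+1)*β) := by
                  linear_combination (-1)*hR
                exact mul_left_cancel₀ hl0.ne' hx
              obtain ⟨γ, hγdef⟩ : ∃ x : ℤ,
                  x = (2*ℓ^2+ℓ+1) - ℓ*β^2 - (ℓ+1)*β := ⟨_, rfl⟩
              have hB1 : β = ℓ*γ := by linear_combination (-1)*hBeq - ℓ*hγdef
              clear hγdef
              subst hB1
              have hγpos : 1 ≤ γ := by
                rcases le_or_gt 1 γ with hx | hx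
                · exact hx
                · exfalso
                  have hγ0 : γ ≤ 0 := by omega
                  have := mul_nonneg hl0.le (neg_nonneg.mpr hγ0)
                  linarith
              have hGeq : (2*ℓ^2+ℓ+1) = ℓ^3*γ^2 + (ℓ^2+ℓ+1)*γ := by
                have hx : ℓ*(2*ℓ^2+ℓ+1) = ℓ*(ℓ^3*γ^2 + (ℓ^2+ℓ+1)*γ) := by
                  linear_combination hBeq
                exact mul_left_cancel₀ hl0.ne' hx
              have hγ2 : 1 ≤ γ^2 := by nlinarith
              have hy1 : ℓ^3*1 ≤ ℓ^3*γ^2 :=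
                mul_le_mul_of_nonneg_left hγ2 (by positivity)
              have hy2 : (ℓ^2+ℓ+1)*1 ≤ (ℓ^2+ℓ+1)*γ :=
                mul_le_mul_of_nonneg_left hγpos (by positivity)
              linarith [hp3, hp2]
            · -- 1 ≤ c
              have hbl : b ≤ ℓ - 1 := by
                by_contra hcon
                push_neg at hcon
                have hblo : ℓ ≤ b := by omega
                have h2' : 1*((2*ℓ^2+ℓ+1)+b*(2*ℓ^3+ℓ^2+2*ℓ))
                    ≤ c*((2*ℓ^2+ℓ+1)+b*(2*ℓ^3+ℓ^2+2*ℓ)) :=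
                  mul_le_mul_of_nonneg_right hc1 hTbS.le
                have h3' : ℓ*(2*ℓ^3+ℓ^2+2*ℓ) ≤ b*(2*ℓ^3+ℓ^2+2*ℓ) :=
                  mul_le_mul_of_nonneg_right hblo hS0.le
                have h4' : 0 ≤ ℓ*b^2 := mul_nonneg hl0.le (by positivity)
                have h5' : 0 ≤ (ℓ^2+ℓ+1)*b := mul_nonneg (by positivity) hb0
                linarith [hG, h2', h3', h4', h5', hp2, hp3, hp4]
              have hcl : c ≤ ℓ - 1 := by
                by_contra hcon
                push_neg at hcon
                have hclo : ℓ ≤ c := by omega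
                have h2' : ℓ*((2*ℓ^2+ℓ+1)+b*(2*ℓ^3+ℓ^2+2*ℓ))
                    ≤ c*((2*ℓ^2+ℓ+1)+b*(2*ℓ^3+ℓ^2+2*ℓ)) :=
                  mul_le_mul_of_nonneg_right hclo hTbS.le
                have h3' : 1*(2*ℓ^3+ℓ^2+2*ℓ) ≤ b*(2*ℓ^3+ℓ^2+2*ℓ) :=
                  mul_le_mul_of_nonneg_right hb hS0.le
                have h4' : ℓ*(1*(2*ℓ^3+ℓ^2+2*ℓ)) ≤ ℓ*(b*(2*ℓ^3+ℓ^2+2*ℓ)) :=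
                  mul_le_mul_of_nonneg_left h3' hl0.le
                have h5' : 0 ≤ ℓ*b^2 := mul_nonneg hl0.le (by positivity)
                have h6' : 0 ≤ (ℓ^2+ℓ+1)*b := mul_nonneg (by positivity) hb0
                have h7' : 0 ≤ ℓ*(ℓ*b^2) := mul_nonneg hl0.le (mul_nonneg hl0.le (by positivity))
                have h8' : 0 ≤ ℓ*((ℓ^2+ℓ+1)*b) := mul_nonneg hl0.le h6'
                linarith [hG, h2', h4', h5', h6', h7', h8', hp2, hp3, hp4]
              obtain ⟨w, hwdef⟩ : ∃ x : ℤ,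
                  x = (-a*(2*ℓ+1) - a*b*(2*ℓ^2+ℓ+2)
                    + (2*ℓ^2+ℓ+1)*(2*ℓ^3+ℓ^2+2*ℓ) + 2*ℓ^2+3*ℓ+2) - 1 - c*(2*ℓ+1) := ⟨_, rfl⟩
              have hw : 2*(b+c) = ℓ*w := by
                linear_combination h1 - hc - ℓ*hwdef
              clear hwdef
              have hw1 : 1 ≤ w := by
                by_contra hcon
                push_neg at hcon
                have hw0 : w ≤ 0 := by omega
                have := mul_nonneg hl0.le (neg_nonneg.mpr hw0)
                linarith
              have hw3 : w ≤ 3 := by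
                by_contra hcon
                push_neg at hcon
                have h4 : 4 ≤ w := by omega
                have h5 : ℓ*4 ≤ ℓ*w := mul_le_mul_of_nonneg_left h4 hl0.le
                linarith
              rcases (by omega : w = 1 ∨ w = 2 ∨ w = 3) with hw' | hw' | hw'
              · -- w = 1 : impossible
                exfalso
                rw [hw'] at hw
                have h21 : 2*(b+c) = ℓ := by linarith
                have hver : ℓ*(2*(2*ℓ^2+ℓ+1)*((b-1)*(ℓ-1-b))
                    - ((2*ℓ^2+ℓ+1)+b*(2*ℓ^3+ℓ^2+2*ℓ))) = ℓ*0 := by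
                  linear_combination 2*hG - ((2*ℓ^2+ℓ+1)+b*(2*ℓ^3+ℓ^2+2*ℓ))*h21
                have h2T : 2*(2*ℓ^2+ℓ+1)*((b-1)*(ℓ-1-b))
                    - ((2*ℓ^2+ℓ+1)+b*(2*ℓ^3+ℓ^2+2*ℓ)) = 0 :=
                  mul_left_cancel₀ hl0.ne' hver
                have hTX : (2*ℓ^2+ℓ+1)*(2*(b-1)*(ℓ-1-b)-1-b*ℓ) = b*ℓ := by
                  linear_combination h2T
                have hblpos : 0 < b*ℓ := mul_pos (by omega) hl0
                have hblT : b*ℓ < 2*ℓ^2+ℓ+1 := by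
                  have := mul_le_mul_of_nonneg_right hbl hl0.le
                  linarith [hp2]
                rcases le_or_gt (2*(b-1)*(ℓ-1-b)-1-b*ℓ) 0 with hX | hX
                · have hz : 0 ≤ (2*ℓ^2+ℓ+1)*(-(2*(b-1)*(ℓ-1-b)-1-b*ℓ)) :=
                    mul_nonneg hT0.le (by linarith)
                  linarith [hz, hTX, hblpos]
                · have hX1 : 1 ≤ 2*(b-1)*(ℓ-1-b)-1-b*ℓ := by
                    have := Int.lt_iff_add_one_le.mp hX
                    linarith
                  have hz : (2*ℓ^2+ℓ+1)*1 ≤ (2*ℓ^2+ℓ+1)*(2*(b-1)*(ℓ-1-b)-1-b*ℓ) :=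
                    mul_le_mul_of_nonneg_left hX1 hT0.le
                  linarith
              · -- w = 2 : b = 1 or b = ℓ-1
                rw [hw'] at hw
                have hbc : b + c = ℓ := by linarith
                have hzero : (ℓ*(2*ℓ^2+ℓ+1))*((b-1)*(ℓ-1-b)) = 0 := by
                  linear_combination hG - ((2*ℓ^2+ℓ+1)+b*(2*ℓ^3+ℓ^2+2*ℓ))*hbc
                have hfac : (b-1)*(ℓ-1-b) = 0 := by
                  rcases mul_eq_zero.mp hzero with hx | hx
                  · exfalso
                    have := mul_pos hl0 hT0
                    linarith
                  · exact hx
                rcases mul_eq_zero.mp hfac with hx | hx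
                · -- b = 1, c = ℓ-1, a = 2ℓ³-ℓ²+2ℓ
                  have hb' : b = 1 := by omega
                  have hcv : c = ℓ - 1 := by omega
                  have haval : a = 2*ℓ^3-ℓ^2+2*ℓ := by
                    linear_combination hc + hb' + (2*ℓ^2+ℓ+2)*hcv
                  exact Or.inr (Or.inr (Or.inr (Or.inr (Or.inl
                    (by linear_combination ha + (2*ℓ^3+ℓ^2+2*ℓ)*haval)))))
                · -- b = ℓ-1, c = 1, a = 2ℓ²+3ℓ+2
                  have hb' : b = ℓ - 1 := by omega
                  have hcv : c = 1 := by omega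
                  have haval : a = 2*ℓ^2+3*ℓ+2 := by
                    linear_combination hc + hb' + (2*ℓ^2+ℓ+2)*hcv
                  exact Or.inr (Or.inr (Or.inr (Or.inl
                    (by linear_combination ha + (2*ℓ^3+ℓ^2+2*ℓ)*haval))))
              · -- w = 3 : impossible
                exfalso
                rw [hw'] at hw
                have h23 : 2*(b+c) = 3*ℓ := by linarith
                have hver : ℓ*(2*(2*ℓ^2+ℓ+1)*((b-1)*(ℓ-1-b))
                    + ((2*ℓ^2+ℓ+1)+b*(2*ℓ^3+ℓ^2+2*ℓ))) = ℓ*0 := by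
                  linear_combination 2*hG - ((2*ℓ^2+ℓ+1)+b*(2*ℓ^3+ℓ^2+2*ℓ))*h23
                have h2T : 2*(2*ℓ^2+ℓ+1)*((b-1)*(ℓ-1-b))
                    + ((2*ℓ^2+ℓ+1)+b*(2*ℓ^3+ℓ^2+2*ℓ)) = 0 :=
                  mul_left_cancel₀ hl0.ne' hver
                have hz1 : 0 ≤ (b-1)*(ℓ-1-b) :=
                  mul_nonneg (by omega) (by omega)
                have hz2 : 0 ≤ 2*(2*ℓ^2+ℓ+1)*((b-1)*(ℓ-1-b)) :=
                  mul_nonneg (by linarith) hz1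
                linarith
      · -- reverse inclusion
        rintro (rfl | rfl | rfl | rfl | rfl | rfl)
        · exact ⟨by norm_num,
            ⟨(2 * ℓ + 1) * (ℓ ^ 2 + 1) * (ℓ ^ 2 + ℓ + 1) *
              (2 * ℓ ^ 2 - ℓ + 1) * (2 * ℓ ^ 2 + ℓ + 1), by ring⟩,
            ⟨0, by ring⟩⟩
        · exact ⟨by linarith, ⟨(ℓ*(2*ℓ^3+ℓ^2+2*ℓ)+1)*(2*ℓ^2+ℓ+1), by ring⟩, ⟨1, by ring⟩⟩
        · exact ⟨by linarith [mul_pos hS0 hl0],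
            ⟨((2*ℓ^3+ℓ^2+2*ℓ)+1)*(2*ℓ^2+ℓ+1), by ring⟩, ⟨ℓ, by ring⟩⟩
        · exact ⟨by linarith [mul_pos hS0 (show (0:ℤ) < 2*ℓ^2+3*ℓ+2 by linarith [hp2])],
            ⟨(2*ℓ^2+ℓ+1)+(ℓ-1)*(2*ℓ^3+ℓ^2+2*ℓ), by ring⟩, ⟨2*ℓ^2+3*ℓ+2, by ring⟩⟩
        · exact ⟨by linarith [mul_pos hS0 (show (0:ℤ) < 2*ℓ^3-ℓ^2+2*ℓ by linarith [hp2, hp3])],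
            ⟨(2*ℓ^2+ℓ+1)+(2*ℓ^3+ℓ^2+2*ℓ), by ring⟩, ⟨2*ℓ^3-ℓ^2+2*ℓ, by ring⟩⟩
        · exact ⟨by linarith [mul_pos hS0 (show (0:ℤ) < ℓ*(2*ℓ^3+ℓ^2+2*ℓ)+ℓ+1 by linarith [mul_pos hl0 hS0])],
            ⟨2*ℓ^2+ℓ+1, by ring⟩, ⟨ℓ*(2*ℓ^3+ℓ^2+2*ℓ)+ℓ+1, by ring⟩⟩
    rw [hset]
    have hn1 : (1:ℤ) ∉ ({1+(2*ℓ^3+ℓ^2+2*ℓ), 1+(2*ℓ^3+ℓ^2+2*ℓ)*ℓ,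
        1+(2*ℓ^3+ℓ^2+2*ℓ)*(2*ℓ^2+3*ℓ+2),
        1+(2*ℓ^3+ℓ^2+2*ℓ)*(2*ℓ^3-ℓ^2+2*ℓ),
        1+(2*ℓ^3+ℓ^2+2*ℓ)*(ℓ*(2*ℓ^3+ℓ^2+2*ℓ)+ℓ+1)} : Set ℤ) := by
      simp only [Set.mem_insert_iff, Set.mem_singleton_iff]
      push_neg
      refine ⟨by intro hx; linarith [hp2, hp3, hp4, hp5, hp6, hp7],
        by intro hx; linarith [hp2, hp3, hp4, hp5, hp6, hp7],
        by intro hx; linarith [hp2, hp3, hp4, hp5, hp6, hp7],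
        by intro hx; linarith [hp2, hp3, hp4, hp5, hp6, hp7],
        by intro hx; linarith [hp2, hp3, hp4, hp5, hp6, hp7]⟩
    have hn2 : (1+(2*ℓ^3+ℓ^2+2*ℓ):ℤ) ∉ ({1+(2*ℓ^3+ℓ^2+2*ℓ)*ℓ,
        1+(2*ℓ^3+ℓ^2+2*ℓ)*(2*ℓ^2+3*ℓ+2),
        1+(2*ℓ^3+ℓ^2+2*ℓ)*(2*ℓ^3-ℓ^2+2*ℓ),
        1+(2*ℓ^3+ℓ^2+2*ℓ)*(ℓ*(2*ℓ^3+ℓ^2+2*ℓ)+ℓ+1)} : Set ℤ) := by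
      simp only [Set.mem_insert_iff, Set.mem_singleton_iff]
      push_neg
      refine ⟨by intro hx; linarith [hp2, hp3, hp4, hp5, hp6, hp7],
        by intro hx; linarith [hp2, hp3, hp4, hp5, hp6, hp7],
        by intro hx; linarith [hp2, hp3, hp4, hp5, hp6, hp7],
        by intro hx; linarith [hp2, hp3, hp4, hp5, hp6, hp7]⟩
    have hn3 : (1+(2*ℓ^3+ℓ^2+2*ℓ)*ℓ:ℤ) ∉ ({1+(2*ℓ^3+ℓ^2+2*ℓ)*(2*ℓ^2+3*ℓ+2),
        1+(2*ℓ^3+ℓ^2+2*ℓ)*(2*ℓ^3-ℓ^2+2*ℓ),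
        1+(2*ℓ^3+ℓ^2+2*ℓ)*(ℓ*(2*ℓ^3+ℓ^2+2*ℓ)+ℓ+1)} : Set ℤ) := by
      simp only [Set.mem_insert_iff, Set.mem_singleton_iff]
      push_neg
      refine ⟨by intro hx; linarith [hp2, hp3, hp4, hp5, hp6, hp7],
        by intro hx; linarith [hp2, hp3, hp4, hp5, hp6, hp7],
        by intro hx; linarith [hp2, hp3, hp4, hp5, hp6, hp7]⟩
    have hn4 : (1+(2*ℓ^3+ℓ^2+2*ℓ)*(2*ℓ^2+3*ℓ+2):ℤ) ∉
        ({1+(2*ℓ^3+ℓ^2+2*ℓ)*(2*ℓ^3-ℓ^2+2*ℓ),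
        1+(2*ℓ^3+ℓ^2+2*ℓ)*(ℓ*(2*ℓ^3+ℓ^2+2*ℓ)+ℓ+1)} : Set ℤ) := by
      simp only [Set.mem_insert_iff, Set.mem_singleton_iff]
      push_neg
      refine ⟨by intro hx; linarith [hp2, hp3, hp4, hp5, hp6, hp7],
        by intro hx; linarith [hp2, hp3, hp4, hp5, hp6, hp7]⟩
    have hn5 : (1+(2*ℓ^3+ℓ^2+2*ℓ)*(2*ℓ^3-ℓ^2+2*ℓ):ℤ) ≠
        1+(2*ℓ^3+ℓ^2+2*ℓ)*(ℓ*(2*ℓ^3+ℓ^2+2*ℓ)+ℓ+1) := by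
      intro hx
      linarith [hp2, hp3, hp4, hp5, hp6, hp7]
    rw [Set.ncard_insert_of_notMem hn1 (Set.toFinite _),
      Set.ncard_insert_of_notMem hn2 (Set.toFinite _),
      Set.ncard_insert_of_notMem hn3 (Set.toFinite _),
      Set.ncard_insert_of_notMem hn4 (Set.toFinite _),
      Set.ncard_pair hn5]
end

section
/- For every integer x ≥ 2, setting N(x) = (x+2)(x+1)²(x²+x+1)(x²+x+2)(x²+2x+2) and S(x) = x³+3x²+4x+3, the integer N(x) has at least 7 divisors congruent to 1 modulo S(x), counting both positive and negative divisors; that is, the set of integers d with d ∣ N(x) and S(x) ∣ d − 1 has at least 7 elements. -/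
set_option maxHeartbeats 1000000 in
/-- For x ≥ 2, N(x) = (x+2)(x+1)²(x²+x+1)(x²+x+2)(x²+2x+2) has at least 7 divisors
(counting positive and negative divisors) congruent to 1 mod S(x) = x³+3x²+4x+3. -/
theorem seven_divisors_family (x : ℤ) (hx : 2 ≤ x) :
    7 ≤ {d : ℤ | d ∣ (x + 2) * (x + 1) ^ 2 * (x ^ 2 + x + 1) *
          (x ^ 2 + x + 2) * (x ^ 2 + 2 * x + 2) ∧
        (x ^ 3 + 3 * x ^ 2 + 4 * x + 3) ∣ d - 1}.ncard := by
  obtain ⟨y, hy, rfl⟩ : ∃ y : ℤ, 0 ≤ y ∧ x = y + 2 := ⟨x - 2, by omega, by ring⟩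
  set x : ℤ := y + 2 with hxdef
  set N : ℤ := (x + 2) * (x + 1) ^ 2 * (x ^ 2 + x + 1) *
      (x ^ 2 + x + 2) * (x ^ 2 + 2 * x + 2) with hN
  set S : ℤ := x ^ 3 + 3 * x ^ 2 + 4 * x + 3 with hS
  set T : Set ℤ := {d : ℤ | d ∣ N ∧ S ∣ d - 1} with hT
  set A : ℤ := (x + 2) * (x ^ 2 + x + 2) with hA
  set B : ℤ := -((x + 1) * (x ^ 2 + 2 * x + 2)) with hB
  set C : ℤ := (x + 1) ^ 2 * (x ^ 2 + x + 1) with hC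
  set D : ℤ := (x + 2) * (x ^ 2 + x + 1) * (x ^ 2 + 2 * x + 2) with hD
  have hNpos : 0 < N := by
    have h1 : (0:ℤ) < x + 2 := by omega
    have h2 : (0:ℤ) < (x + 1) ^ 2 := by positivity
    have h3 : (0:ℤ) < x ^ 2 + x + 1 := by nlinarith
    have h4 : (0:ℤ) < x ^ 2 + x + 2 := by nlinarith
    have h5 : (0:ℤ) < x ^ 2 + 2 * x + 2 := by nlinarith
    exact mul_pos (mul_pos (mul_pos (mul_pos h1 h2) h3) h4) h5
  -- finiteness of T
  have hTfin : T.Finite := by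
    apply (Set.finite_Icc (-N) N).subset
    rintro d ⟨hdvd, -⟩
    constructor
    · have : -d ≤ N := Int.le_of_dvd hNpos ((neg_dvd).mpr hdvd)
      linarith
    · exact Int.le_of_dvd hNpos hdvd
  -- the seven elements
  have mem1 : (1:ℤ) ∈ T := ⟨one_dvd _, ⟨0, by ring⟩⟩
  have memA : A ∈ T :=
    ⟨⟨(x + 1) ^ 2 * (x ^ 2 + x + 1) * (x ^ 2 + 2 * x + 2), by rw [hN, hA]; ring⟩,
     ⟨1, by rw [hA, hS]; ring⟩⟩
  have memB : B ∈ T :=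
    ⟨⟨-((x + 2) * (x + 1) * (x ^ 2 + x + 1) * (x ^ 2 + x + 2)), by rw [hN, hB]; ring⟩,
     ⟨-1, by rw [hB, hS]; ring⟩⟩
  have memC : C ∈ T :=
    ⟨⟨(x + 2) * (x ^ 2 + x + 2) * (x ^ 2 + 2 * x + 2), by rw [hN, hC]; ring⟩,
     ⟨x, by rw [hC, hS]; ring⟩⟩
  have memAB : A * B ∈ T :=
    ⟨⟨-((x + 1) * (x ^ 2 + x + 1)), by rw [hN, hA, hB]; ring⟩,
     ⟨B - 1, by rw [hA, hB, hS]; ring⟩⟩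
  have memAC : A * C ∈ T :=
    ⟨⟨x ^ 2 + 2 * x + 2, by rw [hN, hA, hC]; ring⟩,
     ⟨C + x, by rw [hA, hC, hS]; ring⟩⟩
  have memD : D ∈ T :=
    ⟨⟨(x + 1) ^ 2 * (x ^ 2 + x + 2), by rw [hN, hD]; ring⟩,
     ⟨(x + 1) ^ 2, by rw [hD, hS]; ring⟩⟩
  -- strict ordering A*B < B < 1 < A < C < D < A*C
  have o1 : A * B < B := by
    have h : B - A * B = y^6 + 18*y^5 + 137*y^4 + 565*y^3 + 1333*y^2 + 1708*y + 930 := by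
      rw [hA, hB, hxdef]; ring
    nlinarith [pow_nonneg hy 2, pow_nonneg hy 3, pow_nonneg hy 4, pow_nonneg hy 5, pow_nonneg hy 6]
  have o2 : B < 1 := by
    have h : 1 - B = y^3 + 9*y^2 + 28*y + 31 := by rw [hB, hxdef]; ring
    nlinarith [pow_nonneg hy 2, pow_nonneg hy 3]
  have o3 : (1:ℤ) < A := by
    have h : A - 1 = y^3 + 9*y^2 + 28*y + 31 := by rw [hA, hxdef]; ring
    nlinarith [pow_nonneg hy 2, pow_nonneg hy 3]
  have o4 : A < C := by
    have h : C - A = y^4 + 10*y^3 + 37*y^2 + 59*y + 31 := by rw [hA, hC, hxdef]; ring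
    nlinarith [pow_nonneg hy 2, pow_nonneg hy 3, pow_nonneg hy 4]
  have o5 : C < D := by
    have h : D - C = y^5 + 14*y^4 + 80*y^3 + 234*y^2 + 351*y + 217 := by rw [hC, hD, hxdef]; ring
    nlinarith [pow_nonneg hy 2, pow_nonneg hy 3, pow_nonneg hy 4, pow_nonneg hy 5]
  have o6 : D < A * C := by
    have h : A * C - D = y^7 + 20*y^6 + 172*y^5 + 826*y^4 + 2395*y^3 + 4195*y^2 + 4110*y + 1736 := by
      rw [hA, hC, hD, hxdef]; ring
    nlinarith [pow_nonneg hy 2, pow_nonneg hy 3, pow_nonneg hy 4, pow_nonneg hy 5, pow_nonneg hy 6, pow_nonneg hy 7]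
  have hsub : ({A * B, B, 1, A, C, D, A * C} : Set ℤ) ⊆ T := by
    intro d hd
    simp only [Set.mem_insert_iff, Set.mem_singleton_iff] at hd
    rcases hd with rfl | rfl | rfl | rfl | rfl | rfl | rfl
    exacts [memAB, memB, mem1, memA, memC, memD, memAC]
  have hcard : ({A * B, B, 1, A, C, D, A * C} : Set ℤ).ncard = 7 := by
    rw [Set.ncard_insert_of_notMem (by
          simp only [Set.mem_insert_iff, Set.mem_singleton_iff]
          push_neg
          exact ⟨by linarith, by linarith, by linarith, by linarith, by linarith, by linarith⟩),
        Set.ncard_insert_of_notMem (by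
          simp only [Set.mem_insert_iff, Set.mem_singleton_iff]
          push_neg
          exact ⟨by linarith, by linarith, by linarith, by linarith, by linarith⟩),
        Set.ncard_insert_of_notMem (by
          simp only [Set.mem_insert_iff, Set.mem_singleton_iff]
          push_neg
          exact ⟨by linarith, by linarith, by linarith, by linarith⟩),
        Set.ncard_insert_of_notMem (by
          simp only [Set.mem_insert_iff, Set.mem_singleton_iff]
          push_neg
          exact ⟨by linarith, by linarith, by linarith⟩),
        Set.ncard_insert_of_notMem (by
          simp only [Set.mem_insert_iff, Set.mem_singleton_iff]
          push_neg
          exact ⟨by linarith, by linarith⟩),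
        Set.ncard_insert_of_notMem (by
          simp only [Set.mem_singleton_iff]
          exact by linarith),
        Set.ncard_singleton]
  calc (7:ℕ) = ({A * B, B, 1, A, C, D, A * C} : Set ℤ).ncard := hcard.symm
    _ ≤ T.ncard := Set.ncard_le_ncard hsub hTfin
end

section
/- Let N = 104254876089000 and S = 105787. Then gcd(N, S) = 1, S³ > N, and N has exactly 6 positive divisors congruent to 1 modulo S; that is, the set of positive integers d with d ∣ N and S ∣ d − 1 has exactly 6 elements. -/
lemma key_check : ∀ a ∈ (8:ℕ).divisors, ∀ b ∈ (27:ℕ).divisors, ∀ c ∈ (125:ℕ).divisors,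
    ∀ e ∈ (7:ℕ).divisors, ∀ f ∈ (13:ℕ).divisors, ∀ g ∈ (31:ℕ).divisors,
    ∀ h ∈ (97:ℕ).divisors, ∀ i ∈ (103:ℕ).divisors, ∀ j ∈ (137:ℕ).divisors,
    (a * (b * (c * (e * (f * (g * (h * (i * j)))))))) % 105787 = 1 →
    (a * (b * (c * (e * (f * (g * (h * (i * j)))))))) ∈
      ({1, 211575, 1798380, 42843736, 492121125, 380492248500} : Finset ℕ) := by decide

lemma key (n : ℕ) (hd : n ∣ 104254876089000) (hm : n % 105787 = 1) :
    n ∈ ({1, 211575, 1798380, 42843736, 492121125, 380492248500} : Finset ℕ) := by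
  have hn : n ∈ Nat.divisors 104254876089000 := Nat.mem_divisors.2 ⟨hd, by norm_num⟩
  have hfac : (104254876089000 : ℕ) =
      8 * (27 * (125 * (7 * (13 * (31 * (97 * (103 * 137))))))) := by norm_num
  rw [hfac] at hn
  simp only [Nat.divisors_mul, Finset.mem_mul] at hn
  obtain ⟨a, ha, x, hx, rfl⟩ := hn
  obtain ⟨b, hb, x, hx, rfl⟩ := hx
  obtain ⟨c, hc, x, hx, rfl⟩ := hx
  obtain ⟨e, he, x, hx, rfl⟩ := hx
  obtain ⟨f, hf, x, hx, rfl⟩ := hx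
  obtain ⟨g, hg, x, hx, rfl⟩ := hx
  obtain ⟨h, hh, x, hx, rfl⟩ := hx
  obtain ⟨i, hi, j, hj, rfl⟩ := hx
  exact key_check a ha b hb c hc e he f hf g hg h hh i hi j hj hm

/-- N = 104254876089000 and S = 105787 satisfy gcd(N, S) = 1, S³ > N, and N has
exactly 6 positive divisors congruent to 1 mod S. -/
theorem example_six_divisors :
    Int.gcd 104254876089000 105787 = 1 ∧
    (105787 : ℤ) ^ 3 > 104254876089000 ∧
    {d : ℤ | 0 < d ∧ d ∣ 104254876089000 ∧ (105787 : ℤ) ∣ d - 1}.ncard = 6 := by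
  refine ⟨by norm_num, by norm_num, ?_⟩
  have hset : {d : ℤ | 0 < d ∧ d ∣ 104254876089000 ∧ (105787 : ℤ) ∣ d - 1} =
      (↑({1, 211575, 1798380, 42843736, 492121125, 380492248500} : Finset ℤ) : Set ℤ) := by
    ext d
    simp only [Set.mem_setOf_eq, Finset.coe_insert, Set.mem_insert_iff,
      Finset.coe_singleton, Set.mem_singleton_iff]
    constructor
    · rintro ⟨hpos, hdvd, hmod⟩
      lift d to ℕ using le_of_lt hpos
      have hn : d ∣ 104254876089000 := by exact_mod_cast hdvd
      have hpos' : 1 ≤ d := by exact_mod_cast hpos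
      have hmod' : (105787 : ℕ) ∣ d - 1 := by
        have : ((105787 : ℕ) : ℤ) ∣ ((d - 1 : ℕ) : ℤ) := by
          push_cast [hpos']; exact_mod_cast hmod
        exact_mod_cast this
      have hm : d % 105787 = 1 := by omega
      have := key d hn hm
      fin_cases this <;> norm_num
    · rintro (rfl | rfl | rfl | rfl | rfl | rfl) <;>
        refine ⟨by norm_num, by norm_num, by norm_num⟩
  rw [hset, Set.ncard_coe_finset]
  decide
end
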